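/- arXiv:2011.02857 — 4 statements merged into one kernel-verified Lean document; each statement's English description precedes it below -/
import Mathlib

section
/- For the function G(t,y) = (1 − y·g(t))^{−α} and points t_0,…,t_K, the determinant of the matrix whose (l,i) entry is ∂_y^l G(t_i, y) equals (∏_{i=0}^{K−1} (α+i)^{K−i}) · (∏_{i=0}^{K} (1 − y·g(t_i))^{−(α+K)}) · ∏_{0 ≤ j < i ≤ K} (g(t_i) − g(t_j)). -/
open Finset Matrix

lemma iter_deriv_rpow (α c : ℝ) : ∀ l : ℕ, ∀ z : ℝ, 0 < 1 - z * c →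
    iteratedDeriv l (fun z => (1 - z * c) ^ (-α)) z
      = (∏ m ∈ Finset.range l, (α + m)) * c ^ l * (1 - z * c) ^ (-α - l) := by
  intro l
  induction l with
  | zero => intro z hz; simp
  | succ l ih =>
    intro z hz
    rw [iteratedDeriv_succ]
    have hev : iteratedDeriv l (fun z => (1 - z * c) ^ (-α)) =ᶠ[nhds z]
        fun w => (∏ m ∈ Finset.range l, (α + m)) * c ^ l * (1 - w * c) ^ (-α - l) := by
      have hopen : IsOpen {w : ℝ | 0 < 1 - w * c} :=
        isOpen_lt continuous_const (by continuity)
      filter_upwards [hopen.mem_nhds hz] with w hw using ih w hw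
    rw [hev.deriv_eq]
    have h1 : HasDerivAt (fun w : ℝ => 1 - w * c) (-c) z := by
      simpa using ((hasDerivAt_id z).mul_const c).const_sub 1
    have hd : HasDerivAt (fun w : ℝ => (1 - w * c) ^ (-α - l))
        ((-c) * (-α - l) * (1 - z * c) ^ (-α - l - 1)) z :=
      h1.rpow_const (Or.inl (ne_of_gt hz))
    rw [((hd.const_mul ((∏ m ∈ Finset.range l, (α + m)) * c ^ l)).deriv :)]
    rw [Finset.prod_range_succ]
    have hc : (-α - ((l : ℕ) + 1 : ℕ) : ℝ) = -α - l - 1 := by push_cast; ring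
    rw [hc]
    ring

lemma prod_prod_range (f : ℕ → ℝ) (K : ℕ) :
    (∏ l ∈ Finset.range (K+1), ∏ m ∈ Finset.range l, f m)
      = ∏ m ∈ Finset.range K, f m ^ (K - m) := by
  rw [Finset.prod_comm' (t' := Finset.range K) (s' := fun y => Finset.Ioc y K)
    (fun x y => by simp only [Finset.mem_range, Finset.mem_Ioc]; omega)]
  refine Finset.prod_congr rfl fun y _ => ?_
  rw [Finset.prod_const, Nat.card_Ioc]

lemma prod_pairs (K : ℕ) (u : Fin (K+1) → ℝ) :
    (∏ i : Fin (K+1), ∏ j ∈ Finset.Ioi i, (u i * u j)) = ∏ i : Fin (K+1), u i ^ K := by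
  have h1 : (∏ i : Fin (K+1), ∏ j ∈ Finset.Ioi i, (u i * u j))
      = (∏ i : Fin (K+1), u i ^ (Finset.Ioi i).card)
        * ∏ i : Fin (K+1), ∏ j ∈ Finset.Ioi i, u j := by
    rw [← Finset.prod_mul_distrib]
    refine Finset.prod_congr rfl fun i _ => ?_
    rw [Finset.prod_mul_distrib, Finset.prod_const]
  have h2 : (∏ i : Fin (K+1), ∏ j ∈ Finset.Ioi i, u j)
      = ∏ j : Fin (K+1), u j ^ (Finset.Iio j).card := by
    rw [Finset.prod_comm' (t' := Finset.univ) (s' := fun j => Finset.Iio j)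
      (fun x y => by simp)]
    exact Finset.prod_congr rfl fun j _ => Finset.prod_const _
  rw [h1, h2, ← Finset.prod_mul_distrib]
  refine Finset.prod_congr rfl fun i _ => ?_
  rw [← pow_add]
  congr 1
  rw [Fin.card_Ioi, Fin.card_Iio]
  omega

/-- Explicit formula for the Wronskian-in-`y` determinant of the functions
`y ↦ (1 - y g(tᵢ))^(-α)` at the points `t 0, …, t K`. -/
theorem stmt_2 (E : Set ℝ) (hE : IsOpen E) (g : ℝ → ℝ) (hg : AnalyticOn ℝ g E)
    (α : ℝ) (K : ℕ) (y : ℝ) (hy : ∀ t ∈ E, 0 < 1 - y * g t)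
    (t : Fin (K+1) → ℝ) (ht : ∀ i, t i ∈ E) :
    Matrix.det (Matrix.of fun l i : Fin (K+1) =>
        iteratedDeriv (l : ℕ) (fun z => (1 - z * g (t i)) ^ (-α)) y)
      = (∏ i ∈ Finset.range K, (α + (i : ℝ)) ^ (K - i))
        * (∏ i : Fin (K+1), (1 - y * g (t i)) ^ (-(α + (K : ℝ))))
        * ∏ i : Fin (K+1), ∏ j ∈ Finset.Iio i, (g (t i) - g (t j)) := by
  set c : Fin (K+1) → ℝ := fun i => g (t i) with hc
  set u : Fin (K+1) → ℝ := fun i => 1 - y * c i with hudef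
  have hu : ∀ i, 0 < u i := fun i => hy _ (ht i)
  have hune : ∀ i, u i ≠ 0 := fun i => ne_of_gt (hu i)
  set w : Fin (K+1) → ℝ := fun i => c i / u i with hwdef
  set P : Fin (K+1) → ℝ := fun l => ∏ m ∈ Finset.range (l : ℕ), (α + m) with hP
  -- Step 1: rewrite entries
  have hM : (Matrix.of fun l i : Fin (K+1) =>
        iteratedDeriv (l : ℕ) (fun z => (1 - z * g (t i)) ^ (-α)) y)
      = Matrix.of fun l i : Fin (K+1) =>
        P l * (u i ^ (-(α + (K : ℝ))) * (w i ^ (l : ℕ) * u i ^ K)) := by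
    ext l i
    simp only [Matrix.of_apply]
    rw [iter_deriv_rpow α (c i) (l : ℕ) y (hu i)]
    have hl : (l : ℕ) ≤ K := Nat.lt_succ_iff.mp l.isLt
    have key : u i ^ (-α - (l : ℕ) : ℝ)
        = u i ^ (-(α + (K : ℝ))) * (u i ^ ((K - (l : ℕ) : ℕ) : ℝ)) := by
      rw [← Real.rpow_add (hu i)]
      congr 1
      push_cast [hl]
      ring
    have hw : w i ^ (l : ℕ) * u i ^ K = c i ^ (l : ℕ) * u i ^ (K - (l : ℕ)) := by
      rw [hwdef]
      simp only [div_pow]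
      rw [pow_sub₀ (u i) (hune i) hl]
      field_simp
    rw [key, hw, Real.rpow_natCast]
    ring
  rw [hM]
  rw [show (Matrix.of fun l i : Fin (K+1) =>
        P l * (u i ^ (-(α + (K : ℝ))) * (w i ^ (l : ℕ) * u i ^ K)))
      = Matrix.of fun l i : Fin (K+1) =>
        P l * Matrix.of (fun l i : Fin (K+1) =>
          u i ^ (-(α + (K : ℝ))) * (w i ^ (l : ℕ) * u i ^ K)) l i from rfl]
  rw [Matrix.det_mul_column P]
  rw [show (Matrix.of fun l i : Fin (K+1) =>
        u i ^ (-(α + (K : ℝ))) * (w i ^ (l : ℕ) * u i ^ K))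
      = Matrix.of fun l i : Fin (K+1) =>
        (fun j => u j ^ (-(α + (K : ℝ)))) i * Matrix.of (fun l i : Fin (K+1) =>
          w i ^ (l : ℕ) * u i ^ K) l i from rfl]
  rw [Matrix.det_mul_row]
  -- the Vandermonde part
  have hV : (Matrix.of fun l i : Fin (K+1) => w i ^ (l : ℕ) * u i ^ K)
      = (Matrix.vandermonde w)ᵀ * Matrix.diagonal (fun i => u i ^ K) := by
    ext l i
    simp [Matrix.mul_diagonal, Matrix.vandermonde_apply, Matrix.transpose_apply]
  rw [hV, Matrix.det_mul, Matrix.det_transpose, Matrix.det_vandermonde,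
    Matrix.det_diagonal]
  -- scalar bookkeeping
  have hA : (∏ l : Fin (K+1), P l) = ∏ i ∈ Finset.range K, (α + (i : ℝ)) ^ (K - i) := by
    rw [hP, Fin.prod_univ_eq_prod_range (fun l => ∏ m ∈ Finset.range l, (α + (m : ℝ)))]
    exact prod_prod_range (fun m => α + (m : ℝ)) K
  have hC : (∏ i : Fin (K+1), ∏ j ∈ Finset.Ioi i, (w j - w i))
        * (∏ i : Fin (K+1), u i ^ K)
      = ∏ i : Fin (K+1), ∏ j ∈ Finset.Iio i, (c i - c j) := by
    rw [← prod_pairs K u, ← Finset.prod_mul_distrib]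
    have : ∀ i : Fin (K+1), (∏ j ∈ Finset.Ioi i, (w j - w i)) * ∏ j ∈ Finset.Ioi i, (u i * u j)
        = ∏ j ∈ Finset.Ioi i, (c j - c i) := by
      intro i
      rw [← Finset.prod_mul_distrib]
      refine Finset.prod_congr rfl fun j _ => ?_
      rw [hwdef]
      simp only
      rw [div_sub_div _ _ (hune j) (hune i), mul_comm (u i) (u j),
        div_mul_cancel₀ _ (mul_ne_zero (hune j) (hune i))]
      simp only [hudef]
      ring
    rw [Finset.prod_congr rfl fun i _ => this i]
    rw [Finset.prod_comm' (t' := Finset.univ) (s' := fun j => Finset.Iio j)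
      (fun x y => by simp)]
  rw [hA]
  rw [← hC]
  ring
end

section
/- If g is strictly monotone on the interval E, α ∉ {0, −1, −2, …, −(K−1)}, and 1 − y·g(t) > 0 on E, then for any pairwise distinct points t_0,…,t_K in E the determinant of the matrix with entries ∂_y^l G(t_i,y), where G(t,y) = (1 − y g(t))^{−α}, is nonzero. -/
/-!
Writing `c = g(t)`, the `l`-th derivative in `y` of `(1 - y c)^(-α)` is
`(α)_l c^l (1 - y c)^(-α-l) = (α)_l (1 - y c)^(-α) u^l` with `u = c / (1 - y c)`.
Hence the matrix is the transposed Vandermonde matrix of the `uᵢ`, with its rows scaled by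
the Pochhammer symbols `(α)_l`, which are nonzero by the assumption on `α`, and its columns
scaled by the positive numbers `(1 - y g(tᵢ))^(-α)`. The `uᵢ` are distinct because `g` is
injective on `E` and the Möbius map `c ↦ c / (1 - y c)` is injective where defined.
-/

open Matrix

lemma iteratedDeriv_one_sub_mul_rpow_neg (α c : ℝ) (l : ℕ) {z : ℝ} (hz : 0 < 1 - z * c) :
    iteratedDeriv l (fun z => (1 - z * c) ^ (-α)) z
      = (ascPochhammer ℝ l).eval α * c ^ l * (1 - z * c) ^ (-α - l) := by
  induction l generalizing z with
  | zero => simp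
  | succ l ih =>
    have hopen : IsOpen {w : ℝ | 0 < 1 - w * c} := isOpen_lt continuous_const (by fun_prop)
    have hderiv : HasDerivAt (fun w => (1 - w * c) ^ (-α - l))
        (-c * (-α - l) * (1 - z * c) ^ (-α - l - 1)) z := by
      refine HasDerivAt.rpow_const ?_ (Or.inl hz.ne')
      simpa using ((hasDerivAt_id z).mul_const c).const_sub 1
    rw [iteratedDeriv_succ,
      (Filter.eventuallyEq_of_mem (hopen.mem_nhds hz) fun w hw => ih hw).deriv_eq,
      (hderiv.const_mul _).deriv, ascPochhammer_succ_eval]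
    push_cast
    ring_nf

lemma iteratedDeriv_one_sub_mul_rpow_neg_eq_mul_pow (α c : ℝ) (l : ℕ) {z : ℝ}
    (hz : 0 < 1 - z * c) :
    iteratedDeriv l (fun z => (1 - z * c) ^ (-α)) z
      = (ascPochhammer ℝ l).eval α * (1 - z * c) ^ (-α) * (c / (1 - z * c)) ^ l := by
  rw [iteratedDeriv_one_sub_mul_rpow_neg α c l hz, Real.rpow_sub hz, Real.rpow_natCast, div_pow]
  ring

lemma ascPochhammer_eval_ne_zero {R : Type*} [CommRing R] [IsDomain R] {α : R} {K l : ℕ}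
    (hα : ∀ i < K, α + (i : R) ≠ 0) (hl : l ≤ K) : (ascPochhammer R l).eval α ≠ 0 := by
  rw [Ne, ascPochhammer_eval_eq_zero_iff]
  rintro ⟨k, hk, hkα⟩
  exact hα k (by omega) (by rw [hkα]; ring)

lemma div_one_sub_mul_injOn {𝕜 : Type*} [Field 𝕜] (y : 𝕜) :
    Set.InjOn (fun c : 𝕜 => c / (1 - y * c)) {c | 1 - y * c ≠ 0} := by
  intro a ha b hb h
  rw [div_eq_div_iff ha hb] at h
  linear_combination h

theorem Matrix.det_of_mul_mul_pow {R : Type*} [CommRing R] {n : ℕ} (r s v : Fin n → R) :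
    det (of fun l i : Fin n => r l * s i * v i ^ (l : ℕ))
      = (∏ l, r l) * (∏ i, s i) * det (vandermonde v) := by
  calc det (of fun l i : Fin n => r l * s i * v i ^ (l : ℕ))
      = det (of fun l i => r l * (of fun l i => s i * (vandermonde v)ᵀ l i) l i) := by
        congr 1; ext; simp [mul_assoc]
    _ = (∏ l, r l) * (∏ i, s i) * det (vandermonde v) := by
        rw [det_mul_column, det_mul_row, det_transpose, mul_assoc]

theorem stmt_3_general (E : Set ℝ)
    (g : ℝ → ℝ)
    (hmono : StrictMonoOn g E ∨ StrictAntiOn g E)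
    (α : ℝ) (K : ℕ) (hα : ∀ i < K, α + (i : ℝ) ≠ 0)
    (y : ℝ) (hy : ∀ t ∈ E, 0 < 1 - y * g t)
    (t : Fin (K+1) → ℝ) (ht : ∀ i, t i ∈ E) (htinj : Function.Injective t) :
    Matrix.det (Matrix.of fun l i : Fin (K+1) =>
        iteratedDeriv (l : ℕ) (fun z => (1 - z * g (t i)) ^ (-α)) y) ≠ 0 := by
  have hb : ∀ i, 0 < 1 - y * g (t i) := fun i => hy _ (ht i)
  have hgt : Function.Injective (fun i => g (t i)) := fun i j h =>
    htinj <| hmono.elim (fun hm => hm.injOn (ht i) (ht j) h) (fun hm => hm.injOn (ht i) (ht j) h)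
  have hu : Function.Injective (fun i => g (t i) / (1 - y * g (t i))) := fun i j h =>
    hgt (div_one_sub_mul_injOn y (hb i).ne' (hb j).ne' h)
  have hentry : (of fun l i : Fin (K+1) =>
        iteratedDeriv (l : ℕ) (fun z => (1 - z * g (t i)) ^ (-α)) y)
      = of fun l i : Fin (K+1) => (ascPochhammer ℝ l).eval α * (1 - y * g (t i)) ^ (-α)
          * (g (t i) / (1 - y * g (t i))) ^ (l : ℕ) := by
    ext l i
    exact iteratedDeriv_one_sub_mul_rpow_neg_eq_mul_pow α _ l (hb i)
  rw [hentry, det_of_mul_mul_pow]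
  refine mul_ne_zero (mul_ne_zero ?_ ?_) (det_vandermonde_ne_zero_iff.mpr hu)
  · exact Finset.prod_ne_zero_iff.mpr fun l _ =>
      ascPochhammer_eval_ne_zero hα (Nat.lt_succ_iff.mp l.isLt)
  · exact Finset.prod_ne_zero_iff.mpr fun i _ => (Real.rpow_pos_of_pos (hb i) _).ne'

/-- If `g` is strictly monotone on `E`, `α + i ≠ 0` for `i < K`, and `1 - y g(t) > 0`
on `E`, then the Wronskian-in-`y` determinant of `y ↦ (1 - y g(tᵢ))^(-α)` at pairwise
distinct points of `E` is nonzero. -/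
theorem stmt_3 (E : Set ℝ) (hE : IsOpen E) (hEconn : E.OrdConnected)
    (g : ℝ → ℝ) (hg : AnalyticOn ℝ g E)
    (hmono : StrictMonoOn g E ∨ StrictAntiOn g E)
    (α : ℝ) (K : ℕ) (hα : ∀ i < K, α + (i : ℝ) ≠ 0)
    (y : ℝ) (hy : ∀ t ∈ E, 0 < 1 - y * g t)
    (t : Fin (K+1) → ℝ) (ht : ∀ i, t i ∈ E) (htinj : Function.Injective t) :
    Matrix.det (Matrix.of fun l i : Fin (K+1) =>
        iteratedDeriv (l : ℕ) (fun z => (1 - z * g (t i)) ^ (-α)) y) ≠ 0 :=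
  stmt_3_general E g hmono α K hα y hy t ht htinj
end

section
/- The ordered set of functions {sin θ, sin 2θ, …, sin mθ} is an extended complete Chebyshev system on (0, π); that is, for each k ∈ {1,…,m}, every nontrivial real linear combination of sin θ, …, sin kθ has at most k−1 zeros on (0, π) counted with multiplicity. -/
/-!
Since `sin ((j + 1) θ) = sin θ · U_j (cos θ)`, the combination is `sin θ · P (cos θ)` with
`P = ∑ λ_j U_j`, a polynomial of degree at most `k - 1` which is nonzero because the `U_j` have
distinct degrees. On `(0, π)` the factor `sin θ` does not vanish and `cos` has nonzero derivative,
so the order of vanishing at `θ` is the multiplicity of `cos θ` as a root of `P`. As `cos` is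
injective on `(0, π)`, the total multiplicity is at most the number of roots of `P`.
-/

/-- `f` has at most `k` zeros on `E` counted with multiplicity. -/
def ZerosWithMultLe (f : ℝ → ℝ) (E : Set ℝ) (k : ℕ) : Prop :=
  ∀ (S : Finset ℝ) (m : ℝ → ℕ), ↑S ⊆ E →
    (∀ x ∈ S, 1 ≤ m x) →
    (∀ x ∈ S, ∀ j < m x, iteratedDeriv j f x = 0) →
    ∑ x ∈ S, m x ≤ k

open Polynomial Polynomial.Chebyshev Real

theorem Polynomial.analyticOrderAt_eval {𝕜 : Type*} [NontriviallyNormedField 𝕜] {P : 𝕜[X]}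
    (hP : P ≠ 0) (c : 𝕜) :
    analyticOrderAt (fun z => P.eval z) c = P.rootMultiplicity c := by
  obtain ⟨Q, hPQ, hQ⟩ := P.exists_eq_pow_rootMultiplicity_mul_and_not_dvd hP c
  rw [(AnalyticOnNhd.eval_polynomial P c trivial).analyticOrderAt_eq_natCast]
  refine ⟨fun z => Q.eval z, AnalyticOnNhd.eval_polynomial Q c trivial,
    fun h => hQ (dvd_iff_isRoot.mpr h), Filter.Eventually.of_forall fun z => ?_⟩
  conv_lhs => rw [hPQ]
  simp

theorem Polynomial.sum_rootMultiplicity_le_natDegree {R : Type*} [CommRing R] [IsDomain R]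
    (P : R[X]) (T : Finset R) : ∑ c ∈ T, P.rootMultiplicity c ≤ P.natDegree := by
  classical
  calc ∑ c ∈ T, P.rootMultiplicity c = ∑ c ∈ T, P.roots.count c := by simp only [count_roots]
    _ ≤ ∑ c ∈ T ∪ P.roots.toFinset, P.roots.count c :=
      Finset.sum_le_sum_of_subset Finset.subset_union_left
    _ = Multiset.card P.roots :=
      Multiset.sum_count_eq_card fun _ h => Finset.mem_union_right _ (Multiset.mem_toFinset.2 h)
    _ ≤ P.natDegree := card_roots' P

theorem analyticOrderAt_sin_mul_eval_cos {P : ℝ[X]} (hP : P ≠ 0) {x : ℝ} (hx : sin x ≠ 0) :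
    analyticOrderAt (fun θ => sin θ * P.eval (cos θ)) x = P.rootMultiplicity (cos x) := by
  have hcos : analyticOrderAt (fun θ => P.eval (cos θ)) x = P.rootMultiplicity (cos x) := by
    rw [← P.analyticOrderAt_eval hP]
    exact analyticOrderAt_comp_of_deriv_ne_zero (f := fun z => P.eval z) (g := cos)
      (by fun_prop) (by simpa using hx)
  have hPcos : AnalyticAt ℝ (fun θ => P.eval (cos θ)) x :=
    (AnalyticOnNhd.eval_polynomial P (cos x) trivial).comp analyticAt_cos
  rw [show (fun θ => sin θ * P.eval (cos θ)) = sin * fun θ => P.eval (cos θ) from rfl,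
    analyticOrderAt_mul analyticAt_sin hPcos,
    analyticOrderAt_eq_zero.2 (Or.inr hx), hcos, zero_add]

theorem ZerosWithMultLe.mono {f : ℝ → ℝ} {E : Set ℝ} {k k' : ℕ} (hf : ZerosWithMultLe f E k)
    (hk : k ≤ k') : ZerosWithMultLe f E k' :=
  fun S m hS hm hz => (hf S m hS hm hz).trans hk

theorem zerosWithMultLe_sin_mul_eval_cos {P : ℝ[X]} (hP : P ≠ 0) :
    ZerosWithMultLe (fun θ => sin θ * P.eval (cos θ)) (Set.Ioo 0 π) P.natDegree := by
  intro S m hS _ hvanish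
  have hm : ∀ x ∈ S, m x ≤ P.rootMultiplicity (cos x) := fun x hx => by
    have hsin : sin x ≠ 0 := (sin_pos_of_pos_of_lt_pi (hS hx).1 (hS hx).2).ne'
    have hf : AnalyticAt ℝ (fun θ => sin θ * P.eval (cos θ)) x :=
      analyticAt_sin.mul ((AnalyticOnNhd.eval_polynomial P (cos x) trivial).comp analyticAt_cos)
    have := (natCast_le_analyticOrderAt_iff_iteratedDeriv_eq_zero hf).2 (hvanish x hx)
    rwa [analyticOrderAt_sin_mul_eval_cos hP hsin, Nat.cast_le] at this
  have hinj : Set.InjOn cos S := injOn_cos.mono fun x hx => Set.Ioo_subset_Icc_self (hS hx)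
  calc ∑ x ∈ S, m x ≤ ∑ x ∈ S, P.rootMultiplicity (cos x) := Finset.sum_le_sum hm
    _ = ∑ c ∈ S.image cos, P.rootMultiplicity c := by rw [Finset.sum_image hinj]
    _ ≤ P.natDegree := P.sum_rootMultiplicity_le_natDegree _

namespace Polynomial.Chebyshev

variable {R : Type*} [CommRing R] [IsDomain R] [NeZero (2 : R)]

variable (R) in
noncomputable def chebyshevUsequence : Polynomial.Sequence R where
  elems' n := U R n
  degree_eq' := degree_U_natCast R

theorem natDegree_sum_smul_U_le (lam : ℕ → R) (k : ℕ) :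
    (∑ j ∈ Finset.range k, lam j • U R j).natDegree ≤ k - 1 :=
  natDegree_sum_le_of_forall_le _ _ fun j hj =>
    (natDegree_smul_le _ _).trans ((natDegree_U_natCast R j).trans_le
      (Nat.le_sub_one_of_lt (Finset.mem_range.1 hj)))

theorem sum_smul_U_ne_zero {lam : ℕ → R} {k : ℕ} (h : ∃ j < k, lam j ≠ 0) :
    ∑ j ∈ Finset.range k, lam j • U R j ≠ 0 := by
  obtain ⟨j, hj, hlam⟩ := h
  exact fun h0 => hlam <| linearIndependent_iff'.1 (chebyshevUsequence R).linearIndependent _ _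
    h0 j (Finset.mem_range.2 hj)

end Polynomial.Chebyshev

theorem sum_mul_sin_eq_sin_mul_eval_cos (lam : ℕ → ℝ) (k : ℕ) (θ : ℝ) :
    ∑ j ∈ Finset.range k, lam j * sin ((j + 1) * θ)
      = sin θ * (∑ j ∈ Finset.range k, lam j • U ℝ j).eval (cos θ) := by
  simp only [eval_finsetSum, eval_smul, smul_eq_mul, Finset.mul_sum]
  refine Finset.sum_congr rfl fun j _ => ?_
  have hU := U_real_cos θ j
  push_cast at hU
  rw [← hU]
  ring

/-- `{sin θ, sin 2θ, …, sin mθ}` is an ECT-system on `(0, π)`: for each `1 ≤ k ≤ m`,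
every nontrivial linear combination of `sin θ, …, sin kθ` has at most `k - 1` zeros on
`(0, π)` counted with multiplicity. -/
theorem stmt_5 (m : ℕ) :
    ∀ k, 1 ≤ k → k ≤ m → ∀ lam : ℕ → ℝ, (∃ j < k, lam j ≠ 0) →
      ZerosWithMultLe (fun θ => ∑ j ∈ Finset.range k, lam j * Real.sin ((j + 1) * θ))
        (Set.Ioo 0 Real.pi) (k - 1) := by
  intro k _ _ lam hlam
  simp only [sum_mul_sin_eq_sin_mul_eval_cos]
  exact (zerosWithMultLe_sin_mul_eval_cos (sum_smul_U_ne_zero hlam)).mono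
    (natDegree_sum_smul_U_le lam k)
end

section
/- Let Δ(ρ,ε) = H(π, x_ε(π,ρ)) − H(−π, ρ) be the displacement function of the equation dx/dt = −H_t/H_x + ε L(t,x), where x_ε(t,ρ) is the solution with x_ε(−π,ρ) = ρ, and let −π = σ_0 < σ_1 < ⋯ < σ_k = π with L|_{[σ_i,σ_{i+1})} = L_i. Then the first-order Melnikov function M_1(ρ) = ∂_ε Δ(ρ,ε)|_{ε=0} equals Σ_{i=0}^{k−1} ∫_{σ_i}^{σ_{i+1}} H_x(t, x_0(t,ρ)) L_i(t, x_0(t,ρ)) dt, where x_0 is the unperturbed solution. -/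
open Real

/-- The first order Melnikov function of `dx/dt = -H_t/H_x + ε L(t,x)` with `L` given
piecewise by `L_i` on `[σ_i, σ_{i+1})`:
`∂_ε Δ(ρ,ε)|_{ε=0} = Σ_i ∫_{σ_i}^{σ_{i+1}} H_x(t, x₀(t)) L_i(t, x₀(t)) dt`. -/
theorem stmt_19 (k : ℕ) (hk : 1 ≤ k)
    (H : ℝ → ℝ → ℝ) (hH : ContDiff ℝ (⊤ : ℕ∞) fun p : ℝ × ℝ => H p.1 p.2)
    (hper : ∀ t x, H (t + 2 * π) x = H t x)
    (σ : Fin (k+1) → ℝ) (hσmono : StrictMono σ)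
    (hσ0 : σ 0 = -π) (hσk : σ (Fin.last k) = π)
    (L : ℝ → ℝ → ℝ) (Li : Fin k → ℝ → ℝ → ℝ)
    (hLi : ∀ i, ContDiff ℝ (⊤ : ℕ∞) fun p : ℝ × ℝ => Li i p.1 p.2)
    (hL : ∀ i : Fin k, ∀ t ∈ Set.Ico (σ i.castSucc) (σ i.succ), ∀ x, L t x = Li i t x)
    (ρ : ℝ) (xsol : ℝ → ℝ → ℝ)
    (hx : ContDiff ℝ (⊤ : ℕ∞) fun p : ℝ × ℝ => xsol p.1 p.2)
    (hinit : ∀ ε, xsol ε (-π) = ρ)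
    (δ : ℝ) (hδ : 0 < δ)
    (hode : ∀ ε, |ε| < δ → ∀ t ∈ Set.Icc (-π) π,
      HasDerivAt (fun s => xsol ε s)
        (-(deriv (fun s => H s (xsol ε t)) t) / (deriv (fun x => H t x) (xsol ε t))
          + ε * L t (xsol ε t)) t)
    (hHx : ∀ t ∈ Set.Icc (-π) π, deriv (fun x => H t x) (xsol 0 t) ≠ 0) :
    deriv (fun ε => H π (xsol ε π) - H (-π) ρ) 0
      = ∑ i : Fin k, ∫ t in (σ i.castSucc)..(σ i.succ),
          deriv (fun x => H t x) (xsol 0 t) * Li i t (xsol 0 t) := by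
  classical
  have hpi : (-π : ℝ) ≤ π := by linarith [pi_pos]
  set g : ℝ × ℝ → ℝ := fun p => H p.1 p.2 with hgdef
  have hdiffg : Differentiable ℝ g := hH.differentiable (by simp)
  set Hx : ℝ × ℝ → ℝ := fun p => fderiv ℝ g p (0, 1) with hHxdef
  set Ht : ℝ × ℝ → ℝ := fun p => fderiv ℝ g p (1, 0) with hHtdef
  have hderx : ∀ t y : ℝ, HasDerivAt (fun x => H t x) (Hx (t, y)) y := by
    intro t y
    have h2 : HasDerivAt (fun y : ℝ => ((t, y) : ℝ × ℝ)) ((0, 1) : ℝ × ℝ) y :=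
      (hasDerivAt_const y t).prodMk (hasDerivAt_id y)
    exact (hdiffg (t, y)).hasFDerivAt.comp_hasDerivAt y h2
  have hdert : ∀ t y : ℝ, HasDerivAt (fun s => H s y) (Ht (t, y)) t := by
    intro t y
    have h2 : HasDerivAt (fun s : ℝ => ((s, y) : ℝ × ℝ)) ((1, 0) : ℝ × ℝ) t :=
      (hasDerivAt_id t).prodMk (hasDerivAt_const t y)
    exact (hdiffg (t, y)).hasFDerivAt.comp_hasDerivAt t h2
  have hderx' : ∀ t y : ℝ, deriv (fun x => H t x) y = Hx (t, y) := fun t y => (hderx t y).deriv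
  have hdert' : ∀ t y : ℝ, deriv (fun s => H s y) t = Ht (t, y) := fun t y => (hdert t y).deriv
  have contHx : Continuous Hx :=
    isBoundedBilinearMap_apply.continuous.comp
      ((hH.continuous_fderiv (by simp)).prodMk continuous_const)
  have contx : Continuous fun p : ℝ × ℝ => xsol p.1 p.2 := hx.continuous
  have contφ : Continuous fun p : ℝ × ℝ => Hx (p.2, xsol p.1 p.2) :=
    contHx.comp (continuous_snd.prodMk contx)
  -- a neighborhood of 0 where Hx is nonvanishing along solutions
  obtain ⟨u, v, huo, hvo, hu0, hvI, huv⟩ :=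
    generalized_tube_lemma (s := {(0:ℝ)}) (t := Set.Icc (-π) π)
      (n := {p : ℝ × ℝ | Hx (p.2, xsol p.1 p.2) ≠ 0})
      isCompact_singleton isCompact_Icc
      (isOpen_compl_singleton.preimage contφ)
      (by
        rintro ⟨e, t⟩ ⟨he, ht⟩
        rw [Set.mem_singleton_iff] at he
        subst he
        have := hHx t ht
        rw [hderx'] at this
        exact this)
  obtain ⟨r, hr0, hball⟩ := Metric.isOpen_iff.1 huo 0 (hu0 rfl)
  set δ' : ℝ := min r δ with hδ'def
  have hδ'pos : 0 < δ' := lt_min hr0 hδ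
  have hnz : ∀ ε : ℝ, |ε| < δ' → ∀ t ∈ Set.Icc (-π) π, Hx (t, xsol ε t) ≠ 0 := by
    intro ε hε t ht
    have hmem : (ε, t) ∈ u ×ˢ v := by
      refine ⟨hball ?_, hvI ht⟩
      rw [Metric.mem_ball, Real.dist_eq, sub_zero]
      exact lt_of_lt_of_le hε (min_le_left _ _)
    exact huv hmem
  -- key derivative computation
  have hkey : ∀ ε : ℝ, |ε| < δ' → ∀ t ∈ Set.Icc (-π) π,
      HasDerivAt (fun s => H s (xsol ε s)) (ε * (Hx (t, xsol ε t) * L t (xsol ε t))) t := by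
    intro ε hε t ht
    have hεδ : |ε| < δ := lt_of_lt_of_le hε (min_le_right _ _)
    have hx' := hode ε hεδ t ht
    rw [hderx', hdert'] at hx'
    set x' : ℝ := -Ht (t, xsol ε t) / Hx (t, xsol ε t) + ε * L t (xsol ε t) with hx'def
    have hp : HasDerivAt (fun s : ℝ => ((s, xsol ε s) : ℝ × ℝ)) ((1, x') : ℝ × ℝ) t :=
      (hasDerivAt_id t).prodMk hx'
    have hcomp := (hdiffg (t, xsol ε t)).hasFDerivAt.comp_hasDerivAt t hp
    have hval : fderiv ℝ g (t, xsol ε t) ((1, x') : ℝ × ℝ)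
        = Ht (t, xsol ε t) + x' * Hx (t, xsol ε t) := by
      have h1 : ((1 : ℝ), x') = ((1:ℝ), (0:ℝ)) + x' • ((0:ℝ), (1:ℝ)) := by
        simp [Prod.ext_iff]
      rw [h1, map_add, map_smul]
      rfl
    rw [hval] at hcomp
    have hnz' := hnz ε hε t ht
    have heq : Ht (t, xsol ε t) + x' * Hx (t, xsol ε t)
        = ε * (Hx (t, xsol ε t) * L t (xsol ε t)) := by
      rw [hx'def]; field_simp; ring
    rw [heq] at hcomp
    exact hcomp
  -- the partition points as a sequence
  set a : ℕ → ℝ := fun n => σ ⟨min n k, lt_of_le_of_lt (min_le_right n k) (Nat.lt_succ_self k)⟩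
    with hadef
  have haval : ∀ i : Fin (k+1), a i.val = σ i := by
    intro i
    show σ _ = σ i
    congr 1
    exact Fin.ext (by simp [Nat.min_eq_left (Nat.lt_succ_iff.1 i.isLt)])
  have ha0 : a 0 = -π := by
    have := haval 0
    simp only [Fin.val_zero] at this
    rw [this, hσ0]
  have hak : a k = π := by
    have := haval (Fin.last k)
    simp only [Fin.val_last] at this
    rw [this, hσk]
  have hamono : Monotone a := by
    intro m n hmn
    exact (hσmono.monotone (by simp [Fin.le_def]; omega))
  have hage : ∀ n, -π ≤ a n := fun n => hσ0 ▸ hσmono.monotone (Fin.zero_le _)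
  have hale : ∀ n, a n ≤ π := fun n => hσk ▸ hσmono.monotone (Fin.le_last _)
  have hcastS : ∀ i : Fin k, a i.val = σ i.castSucc := by
    intro i
    have h := haval i.castSucc
    rwa [Fin.coe_castSucc] at h
  have hsuccS : ∀ i : Fin k, a (i.val + 1) = σ i.succ := by
    intro i
    have h := haval i.succ
    rwa [Fin.val_succ] at h
  -- a.e. equality helper
  have hae' : ∀ (p q : ℝ) (F G : ℝ → ℝ), (∀ x ∈ Set.Ico p q, F x = G x) →
      ∀ᵐ x ∂(MeasureTheory.volume : MeasureTheory.Measure ℝ), x ∈ Set.Ioc p q → F x = G x := by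
    intro p q F G h
    refine MeasureTheory.ae_iff.2 (MeasureTheory.measure_mono_null ?_ (MeasureTheory.measure_singleton q))
    intro x hx
    simp only [Set.mem_setOf_eq, Classical.not_imp] at hx
    obtain ⟨⟨h1, h2⟩, h3⟩ := hx
    by_contra hq
    exact h3 (h x ⟨h1.le, lt_of_le_of_ne h2 hq⟩)
  -- the Melnikov integral as a function of ε
  set Φ : ℝ → ℝ := fun e => ∑ i : Fin k, ∫ t in (σ i.castSucc)..(σ i.succ),
      Hx (t, xsol e t) * Li i t (xsol e t) with hΦdef
  have contΦ : Continuous Φ := by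
    rw [hΦdef]
    refine continuous_finset_sum _ fun i _ => ?_
    refine intervalIntegral.continuous_parametric_intervalIntegral_of_continuous' ?_ _ _
    exact contφ.mul ((hLi i).continuous.comp (continuous_snd.prodMk contx))
  -- the main identity : Δ(ε) = ε * Φ(ε)
  have hFeq : ∀ ε : ℝ, |ε| < δ' → H π (xsol ε π) - H (-π) ρ = ε * Φ ε := by
    intro ε hε
    set f' : ℝ → ℝ := fun t => ε * (Hx (t, xsol ε t) * L t (xsol ε t)) with hf'def
    -- integrability on each subinterval
    have hint : ∀ n < k, IntervalIntegrable f' MeasureTheory.volume (a n) (a (n + 1)) := by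
      intro n hn
      set i : Fin k := ⟨n, hn⟩ with hidef
      have hle : a n ≤ a (n + 1) := hamono (Nat.le_succ n)
      have hc : Continuous fun t => ε * (Hx (t, xsol ε t) * Li i t (xsol ε t)) :=
        continuous_const.mul
          ((contφ.mul ((hLi i).continuous.comp (continuous_snd.prodMk contx))).comp
            (continuous_const.prodMk continuous_id))
      have hci : IntervalIntegrable (fun t => ε * (Hx (t, xsol ε t) * Li i t (xsol ε t)))
          MeasureTheory.volume (a n) (a (n + 1)) := hc.intervalIntegrable _ _
      rw [intervalIntegrable_iff, Set.uIoc_of_le hle] at hci ⊢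
      refine hci.congr ?_
      refine (MeasureTheory.ae_restrict_iff' measurableSet_Ioc).2 ?_
      refine hae' _ _ _ _ ?_
      intro t htm
      rw [hcastS i, hsuccS i] at htm
      show ε * (Hx (t, xsol ε t) * Li i t (xsol ε t))
          = ε * (Hx (t, xsol ε t) * L t (xsol ε t))
      rw [hL i t htm (xsol ε t)]
    -- fundamental theorem of calculus
    have hFTC : ∫ t in (-π)..π, f' t = H π (xsol ε π) - H (-π) (xsol ε (-π)) := by
      have h := intervalIntegral.integral_eq_sub_of_hasDerivAt
        (f := fun s => H s (xsol ε s)) (f' := f') (a := -π) (b := π)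
        (fun t ht => by
          rw [Set.uIcc_of_le hpi] at ht
          exact hkey ε hε t ht)
        (by
          have h2 := IntervalIntegrable.trans_iterate (a := a) (n := k) hint
          rwa [ha0, hak] at h2)
      simpa using h
    have hsum := intervalIntegral.sum_integral_adjacent_intervals
      (a := a) (f := f') (μ := MeasureTheory.volume) (n := k) hint
    rw [ha0, hak] at hsum
    have hpiece : ∀ i : Fin k, (∫ t in a i.val..a (i.val + 1), f' t)
        = ε * ∫ t in (σ i.castSucc)..(σ i.succ), Hx (t, xsol ε t) * Li i t (xsol ε t) := by
      intro i
      rw [hcastS i, hsuccS i]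
      rw [← intervalIntegral.integral_const_mul]
      apply intervalIntegral.integral_congr_ae
      have hle : σ i.castSucc ≤ σ i.succ := (hσmono (Fin.castSucc_lt_succ (i := i))).le
      rw [Set.uIoc_of_le hle]
      refine hae' _ _ _ _ ?_
      intro t htm
      show ε * (Hx (t, xsol ε t) * L t (xsol ε t))
          = ε * (Hx (t, xsol ε t) * Li i t (xsol ε t))
      rw [hL i t htm (xsol ε t)]
    calc H π (xsol ε π) - H (-π) ρ
        = ∫ t in (-π)..π, f' t := by rw [hFTC, hinit]
      _ = ∑ n ∈ Finset.range k, ∫ t in a n..a (n + 1), f' t := hsum.symm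
      _ = ∑ i : Fin k, ∫ t in a i.val..a (i.val + 1), f' t :=
          (Fin.sum_univ_eq_sum_range (fun n => ∫ t in a n..a (n + 1), f' t) k).symm
      _ = ∑ i : Fin k, ε * ∫ t in (σ i.castSucc)..(σ i.succ),
            Hx (t, xsol ε t) * Li i t (xsol ε t) := Finset.sum_congr rfl fun i _ => hpiece i
      _ = ε * Φ ε := by rw [hΦdef, Finset.mul_sum]
  -- conclude by computing the derivative at 0
  have hF0 : H π (xsol 0 π) - H (-π) ρ = 0 := by
    have := hFeq 0 (by rwa [abs_zero])
    simpa using this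
  have hδ'nhds : ∀ᶠ ε in nhds (0:ℝ), |ε| < δ' := by
    have : Set.Ioo (-δ') δ' ∈ nhds (0:ℝ) := Ioo_mem_nhds (by linarith) hδ'pos
    filter_upwards [this] with ε hε
    rw [abs_lt]; exact ⟨hε.1, hε.2⟩
  have hDeriv : HasDerivAt (fun ε => H π (xsol ε π) - H (-π) ρ) (Φ 0) 0 := by
    rw [hasDerivAt_iff_tendsto_slope]
    have h1 : Filter.Tendsto Φ (nhdsWithin (0:ℝ) {(0:ℝ)}ᶜ) (nhds (Φ 0)) :=
      (contΦ.tendsto 0).mono_left nhdsWithin_le_nhds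
    refine Filter.Tendsto.congr' ?_ h1
    filter_upwards [self_mem_nhdsWithin, hδ'nhds.filter_mono nhdsWithin_le_nhds] with ε hne hlt
    have hεne : ε ≠ 0 := hne
    rw [slope_def_field]
    show Φ ε = ((H π (xsol ε π) - H (-π) ρ) - (H π (xsol 0 π) - H (-π) ρ)) / (ε - 0)
    rw [hFeq ε hlt, hF0, sub_zero, sub_zero]
    field_simp
  rw [hDeriv.deriv]
  simp only [hΦdef]
  refine Finset.sum_congr rfl fun i _ => ?_
  refine intervalIntegral.integral_congr fun t _ => ?_
  show Hx (t, xsol 0 t) * Li i t (xsol 0 t)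
      = deriv (fun x => H t x) (xsol 0 t) * Li i t (xsol 0 t)
  rw [hderx']
end
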